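/- Consider the KSVD objective J = (1/2) Tr(E^⊤ E Λ^{-1}) + (1/2) Tr(R^⊤ R Λ^{-1}) − Tr(W_e^⊤ W_r) where E = Φ_q W_e, R = Φ_k W_r, with kernel matrix K = Φ_q Φ_k^⊤. If the stationarity (KKT) conditions W_e = Φ_k^⊤ H_r, W_r = Φ_q^⊤ H_e hold together with K H_r = H_e Λ, K^⊤ H_e = H_r Λ, and H_e^⊤ H_e = H_r^⊤ H_r = I_s, then J = 0. -/

import Mathlib

/-! Stationarity turns `E` and `R` into `H_e Λ` and `H_r Λ`, and `W_eᵀ W_r` into `H_rᵀ Kᵀ H_e = Λ`;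
orthonormality of the columns then makes each of the three traces equal to `Tr Λ`. -/

open Matrix

namespace Matrix

variable {m n α : Type*} [Fintype m] [Fintype n] [DecidableEq n] [CommRing α]

theorem transpose_mul_self_mul_inv_of_eq_mul {E H : Matrix m n α} {Λ : Matrix n n α}
    (hH : Hᵀ * H = 1) (hΛ : Λᵀ = Λ) (hdet : IsUnit Λ.det) (hE : E = H * Λ) :
    Eᵀ * E * Λ⁻¹ = Λ := by
  rw [hE, transpose_mul, hΛ, Matrix.mul_assoc Λ, ← Matrix.mul_assoc Hᵀ, hH, Matrix.one_mul,
    Matrix.mul_assoc, mul_nonsing_inv Λ hdet, Matrix.mul_one]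

end Matrix

/-- At the KKT (stationarity) points of KSVD, the objective
`J = ½ Tr(Eᵀ E Λ⁻¹) + ½ Tr(Rᵀ R Λ⁻¹) − Tr(W_eᵀ W_r)` is zero. -/
theorem ksvd_objective_zero_at_kkt {N p s : ℕ}
    (Φq Φk : Matrix (Fin N) (Fin p) ℝ)
    (We Wr : Matrix (Fin p) (Fin s) ℝ)
    (E R : Matrix (Fin N) (Fin s) ℝ)
    (hE : E = Φq * We) (hR : R = Φk * Wr)
    (K : Matrix (Fin N) (Fin N) ℝ) (hK : K = Φq * Φk.transpose)
    (He Hr : Matrix (Fin N) (Fin s) ℝ)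
    (hHe : He.transpose * He = 1) (hHr : Hr.transpose * Hr = 1)
    (d : Fin s → ℝ) (hd : ∀ i, 0 < d i)
    (Λ : Matrix (Fin s) (Fin s) ℝ) (hΛ : Λ = Matrix.diagonal d)
    (hWe : We = Φk.transpose * Hr) (hWr : Wr = Φq.transpose * He)
    (h1 : K * Hr = He * Λ) (h2 : K.transpose * He = Hr * Λ) :
    (1 / 2) * (E.transpose * E * Λ⁻¹).trace +
        (1 / 2) * (R.transpose * R * Λ⁻¹).trace -
        (We.transpose * Wr).trace = 0 := by
  have hdet : IsUnit Λ.det := by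
    rw [hΛ, det_diagonal]
    exact (Finset.prod_pos fun i _ => hd i).ne'.isUnit
  have hΛsymm : Λᵀ = Λ := by rw [hΛ, diagonal_transpose]
  have hKt : Kᵀ = Φk * Φqᵀ := by rw [hK, transpose_mul, transpose_transpose]
  have hEe : E = He * Λ := by rw [hE, hWe, ← Matrix.mul_assoc, ← hK, h1]
  have hRr : R = Hr * Λ := by rw [hR, hWr, ← Matrix.mul_assoc, ← hKt, h2]
  have hW : Weᵀ * Wr = Λ := by
    rw [hWe, hWr, transpose_mul, transpose_transpose, Matrix.mul_assoc, ← Matrix.mul_assoc Φk,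
      ← hKt, h2, ← Matrix.mul_assoc, hHr, Matrix.one_mul]
  rw [transpose_mul_self_mul_inv_of_eq_mul hHe hΛsymm hdet hEe,
    transpose_mul_self_mul_inv_of_eq_mul hHr hΛsymm hdet hRr, hW]
  ring
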